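/- Let S, N, Q, W be four distinct states of a medium with Nτ = S, Wμ = Q, and concise messages q, q', w, w' with Sq = Nq' = Q and Sw' = Nw = W. Then τ = μ if and only if ℓ(q) + ℓ(w) + 2 = ℓ(q') + ℓ(w'). -/

import Mathlib

/-!
Vacuity of a return message is used only through its counting consequence `IsBalanced`: every
token occurs in it as often as its reverse. For a cycle formed by two concise messages this gives
equal lengths and reversed contents; for a cycle `u ++ t :: m` of two concise messages joined by a
token `t`, it puts the reverse of `t` in exactly one of `u`, `m`, the one that is longer by one.

The four cycles through the edges `N → St` and `W → Q` make ℓ(q') - ℓ(q), ℓ(w') - ℓ(w),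
ℓ(w') - ℓ(q) and ℓ(q') - ℓ(w) all equal to ±1. If `τ = μ`, a concise message ending at `Q`
(resp. `W`) contains no token that is effective there, which makes the first two differences +1.
Conversely, the length identity fixes all four signs; this puts the reverse of `μ` into `w'` but
not into `w`, and in the cycle `W → N → St → W` through `τ` the only place left for `μ` is `τ`.
-/

variable {S : Type*}

/-- Result of applying message `m` (a list of tokens) to state `P`. -/
def mApply (m : List (S → S)) (P : S) : S := m.foldl (fun s τ => τ s) P

/-- `τ'` is a reverse of `τ`. -/
def IsReverse (τ τ' : S → S) : Prop := ∀ P Q : S, P ≠ Q → (τ P = Q ↔ τ' Q = P)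

/-- `(S, T)` is a token system. -/
def IsTokenSystem (T : Set (S → S)) : Prop :=
  Nontrivial S ∧ T.Nonempty ∧ ∀ τ ∈ T, τ ≠ id

/-- `m` is a message of the token system with token set `T`. -/
def IsMsg (T : Set (S → S)) (m : List (S → S)) : Prop := ∀ τ ∈ m, τ ∈ T

/-- `m` is stepwise effective for `P`. -/
def StepwiseEff : List (S → S) → S → Prop
  | [], _ => True
  | τ :: rest, P => τ P ≠ P ∧ StepwiseEff rest (τ P)

/-- `m` is consistent: it contains no token together with a reverse of it. -/
def Consistent (m : List (S → S)) : Prop :=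
  ∀ τ ∈ m, ∀ τ' ∈ m, ¬ IsReverse τ τ'

/-- `m` is concise for `P`. -/
def Concise (T : Set (S → S)) (m : List (S → S)) (P : S) : Prop :=
  IsMsg T m ∧ Consistent m ∧ StepwiseEff m P ∧ m.Nodup

/-- `m` is a return message for `P`. -/
def IsReturn (m : List (S → S)) (P : S) : Prop :=
  StepwiseEff m P ∧ mApply m P = P

/-- `m` is vacuous: its indices partition into pairs of mutually reverse tokens. -/
def Vacuous (m : List (S → S)) : Prop :=
  ∃ σ : Equiv.Perm (Fin m.length),
    (∀ i, σ i ≠ i) ∧ (∀ i, σ (σ i) = i) ∧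
    ∀ i, IsReverse (m.get i) (m.get (σ i))

/-- `(S, T)` is a medium: token system satisfying [Ma] and [Mb]. -/
def IsMedium (T : Set (S → S)) : Prop :=
  IsTokenSystem T ∧
  (∀ P Q : S, P ≠ Q → ∃ m, Concise T m P ∧ mApply m P = Q) ∧
  (∀ (m : List (S → S)) (P : S), IsMsg T m → IsReturn m P → Vacuous m)

/-- Content of a message: its set of tokens. -/
def msgContent (m : List (S → S)) : Set (S → S) := {τ | τ ∈ m}

/-- Token content of a state `P`. -/
def SContent (T : Set (S → S)) (P : S) : Set (S → S) :=
  {τ | ∃ (V : S) (m : List (S → S)), Concise T m V ∧ mApply m V = P ∧ τ ∈ m}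

/-- `mr` is the reverse message `τ̃ₙ…τ̃₁` of `m = τ₁…τₙ`. -/
def IsReverseOfMsg (m mr : List (S → S)) : Prop :=
  List.Forall₂ (fun τ τ' => IsReverse τ τ' ∧ IsReverse τ' τ) m mr.reverse

theorem IsReverse.symm {τ τ' : S → S} (h : IsReverse τ τ') : IsReverse τ' τ :=
  fun P Q hPQ => (h Q P hPQ.symm).symm

theorem IsReverse.apply_eq {τ τ' : S → S} (h : IsReverse τ τ') {P Q : S} (hPQ : P ≠ Q)
    (hτ : τ P = Q) : τ' Q = P :=
  (h P Q hPQ).mp hτ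

theorem IsReverse.unique {τ τ₁ τ₂ : S → S} (h₁ : IsReverse τ τ₁) (h₂ : IsReverse τ τ₂) :
    τ₁ = τ₂ := by
  funext R
  by_cases hR : τ₂ R = R
  · by_contra hne
    rw [hR] at hne
    exact hne (((h₂ _ _ hne).mp ((h₁ _ _ hne).mpr rfl)).symm.trans hR)
  · exact (h₁ _ _ hR).mp ((h₂ _ _ hR).mpr rfl)

theorem IsReverse.unique_left {τ₁ τ₂ τ' : S → S} (h₁ : IsReverse τ₁ τ') (h₂ : IsReverse τ₂ τ') :
    τ₁ = τ₂ :=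
  h₁.symm.unique h₂.symm

theorem Vacuous.exists_isReverse_of_cons {τ : S → S} {m : List (S → S)}
    (hm : Vacuous (τ :: m)) : ∃ τ' ∈ m, IsReverse τ τ' := by
  obtain ⟨σ, hfix, -, hσ⟩ := hm
  obtain ⟨j, hj⟩ := Fin.exists_succ_eq.mpr (hfix 0)
  refine ⟨m.get j, List.get_mem _ _, ?_⟩
  simpa [← hj] using hσ 0

theorem Consistent.subset {l m : List (S → S)} (hm : Consistent m) (h : l ⊆ m) : Consistent l :=
  fun τ hτ τ' hτ' => hm τ (h hτ) τ' (h hτ')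

section Counting

open scoped Classical

theorem Vacuous.count_eq {m : List (S → S)} (hm : Vacuous m) {τ τ' : S → S}
    (h : IsReverse τ τ') : m.count τ = m.count τ' := by
  obtain ⟨σ, -, -, hσ⟩ := hm
  have key : ∀ {a b}, IsReverse a b → m.count a ≤ m.count b := by
    intro a b hab
    have hcount : ∀ c, m.count c = (Finset.univ.filter fun i => m.get i = c).card := fun c =>
      (Fin.card_filter_univ_eq_vector_get_eq_count c ⟨m, rfl⟩).symm
    rw [hcount, hcount]
    refine Finset.card_le_card_of_injOn σ (fun i hi => ?_) σ.injective.injOn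
    simp only [Finset.coe_filter, Finset.mem_univ, true_and, Set.mem_ofPred_eq] at hi ⊢
    exact (hi ▸ hσ i).unique hab
  exact le_antisymm (key h) (key h.symm)

def IsBalanced (m : List (S → S)) : Prop :=
  ∀ τ ∈ m, ∃ τ', IsReverse τ τ' ∧ m.count τ = m.count τ'

variable {m l A B : List (S → S)} {x y τ τ' : S → S}

theorem IsBalanced.count_eq (hm : IsBalanced m) (h : IsReverse τ τ') :
    m.count τ = m.count τ' := by
  by_cases hτ : τ ∈ m
  · obtain ⟨σ, hσ, hc⟩ := hm τ hτ
    rwa [hσ.unique h] at hc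
  by_cases hτ' : τ' ∈ m
  · obtain ⟨σ, hσ, hc⟩ := hm τ' hτ'
    rw [hσ.unique h.symm] at hc
    exact hc.symm
  · rw [List.count_eq_zero.mpr hτ, List.count_eq_zero.mpr hτ']

theorem IsBalanced.perm (hm : IsBalanced m) (hl : m.Perm l) : IsBalanced l := by
  intro τ hτ
  obtain ⟨τ', h, hc⟩ := hm τ (hl.mem_iff.mpr hτ)
  exact ⟨τ', h, by rwa [← hl.count_eq, ← hl.count_eq]⟩

theorem IsBalanced.mem_of_isReverse (hm : IsBalanced m) (hτ : τ ∈ m) (h : IsReverse τ τ') :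
    τ' ∈ m := by
  rw [← List.count_pos_iff, ← hm.count_eq h]
  exact List.count_pos_iff.mpr hτ

theorem IsBalanced.of_cons_cons (hm : IsBalanced (x :: y :: m)) (hxy : IsReverse x y) :
    IsBalanced m := by
  intro τ hτ
  obtain ⟨τ', hττ', -⟩ := hm τ (by simp [hτ])
  refine ⟨τ', hττ', ?_⟩
  have hx : x = τ ↔ y = τ' :=
    ⟨fun h => hxy.unique (h ▸ hττ'), fun h => hxy.unique_left (h ▸ hττ')⟩
  have hy : y = τ ↔ x = τ' :=
    ⟨fun h => hxy.symm.unique (h ▸ hττ'), fun h => hxy.symm.unique_left (h ▸ hττ')⟩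
  have hc := hm.count_eq hττ'
  simp only [List.count_cons, beq_iff_eq] at hc
  by_cases h₁ : x = τ <;> by_cases h₂ : y = τ <;> simp_all

theorem IsBalanced.mem_right_of_mem_left (hm : IsBalanced (A ++ B)) (hA : Consistent A)
    (hτ : τ ∈ A) (h : IsReverse τ τ') : τ' ∈ B :=
  (List.mem_append.mp (hm.mem_of_isReverse (List.mem_append_left B hτ) h)).resolve_left
    fun h' => hA τ hτ τ' h' h

theorem IsBalanced.length_le (hm : IsBalanced (A ++ B)) (hA : Consistent A) (hAnd : A.Nodup) :
    A.length ≤ B.length := by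
  rw [← List.toFinset_card_of_nodup hAnd]
  refine (Finset.card_le_card_of_forall_subsingleton IsReverse (fun τ hτ => ?_)
    (fun _ _ _ h₁ _ h₂ => h₁.2.unique_left h₂.2)).trans (List.toFinset_card_le B)
  rw [List.mem_toFinset] at hτ
  obtain ⟨τ', h, -⟩ := hm τ (List.mem_append_left B hτ)
  exact ⟨τ', List.mem_toFinset.mpr (hm.mem_right_of_mem_left hA hτ h), h⟩

theorem IsBalanced.length_eq (hm : IsBalanced (A ++ B)) (hA : Consistent A) (hAnd : A.Nodup)
    (hB : Consistent B) (hBnd : B.Nodup) : A.length = B.length :=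
  le_antisymm (hm.length_le hA hAnd) ((hm.perm List.perm_append_comm).length_le hB hBnd)

theorem IsBalanced.notMem_of_append_cons (hm : IsBalanced (A ++ x :: B)) (hA : Consistent A)
    (hBnd : B.Nodup) : x ∉ A := by
  intro hx
  obtain ⟨y, hxy, hc⟩ := hm x (by simp)
  have hyA : y ∉ A := fun hy => hA x hx y hy hxy
  have hxy' : x ≠ y := fun h => hA x hx x hx (by rwa [← h] at hxy)
  have hcx := List.count_pos_iff.mpr hx
  have hcy := List.nodup_iff_count_le_one.mp hBnd y
  simp only [List.count_append, List.count_cons, beq_iff_eq, List.count_eq_zero.mpr hyA,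
    hxy', if_true, if_false] at hc
  omega

theorem IsBalanced.reverse_mem_longer (hm : IsBalanced (A ++ x :: B)) (hxy : IsReverse x y)
    (hne : x ≠ y) (hA : Consistent A) (hAnd : A.Nodup) (hB : Consistent B) (hBnd : B.Nodup) :
    (y ∈ A ∧ y ∉ B ∧ A.length = B.length + 1) ∨ (y ∈ B ∧ y ∉ A ∧ B.length = A.length + 1) := by
  have hc := hm.count_eq hxy
  simp only [List.count_append, List.count_cons, beq_iff_eq, hAnd.count, hBnd.count, hne,
    if_true, if_false] at hc
  by_cases hyA : y ∈ A
  · have hxA : x ∉ A := fun hx => hA x hx y hyA hxy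
    have hyB : y ∉ B := fun hyB => by
      have hxB : x ∉ B := fun hx => hB x hx y hyB hxy
      simp [hyA, hyB, hxA, hxB] at hc
    have hbal : IsBalanced (A.erase y ++ B) :=
      (hm.perm (List.perm_middle.trans (((List.perm_cons_erase hyA).append_right B).cons x))
        ).of_cons_cons hxy
    have hlen := hbal.length_eq (hA.subset (List.erase_subset)) (hAnd.erase y) hB hBnd
    rw [List.length_erase_of_mem hyA] at hlen
    have := List.length_pos_of_mem hyA
    exact Or.inl ⟨hyA, hyB, by omega⟩
  · have hyB : y ∈ B := by
      have := hm.mem_of_isReverse (by simp) hxy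
      simp_all [eq_comm]
    have hbal : IsBalanced (A ++ B.erase y) :=
      (hm.perm (List.perm_middle.trans ((((List.perm_cons_erase hyB).append_left A).trans
        List.perm_middle).cons x))).of_cons_cons hxy
    have hlen := hbal.length_eq hA hAnd (hB.subset (List.erase_subset)) (hBnd.erase y)
    rw [List.length_erase_of_mem hyB] at hlen
    have := List.length_pos_of_mem hyB
    exact Or.inr ⟨hyB, hyA, by omega⟩

end Counting

theorem mApply_append (A B : List (S → S)) (P : S) :
    mApply (A ++ B) P = mApply B (mApply A P) :=
  List.foldl_append

theorem StepwiseEff.append {A B : List (S → S)} {P : S} (hA : StepwiseEff A P)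
    (hB : StepwiseEff B (mApply A P)) : StepwiseEff (A ++ B) P := by
  induction A generalizing P with
  | nil => exact hB
  | cons τ A ih => exact ⟨hA.1, ih hA.2 hB⟩

theorem IsMsg.append {T : Set (S → S)} {A B : List (S → S)} (hA : IsMsg T A) (hB : IsMsg T B) :
    IsMsg T (A ++ B) := by
  intro τ hτ
  rcases List.mem_append.mp hτ with h | h
  exacts [hA τ h, hB τ h]

theorem IsMsg.cons {T : Set (S → S)} {τ : S → S} {A : List (S → S)} (hτ : τ ∈ T)
    (hA : IsMsg T A) : IsMsg T (τ :: A) := by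
  intro σ hσ
  rcases List.mem_cons.mp hσ with rfl | h
  exacts [hτ, hA σ h]

namespace IsMedium

variable {T : Set (S → S)} {A B u m : List (S → S)} {t t' τ τ' : S → S} {P P' Q X : S}

theorem exists_concise (hM : IsMedium T) (P Q : S) : ∃ m, Concise T m P ∧ mApply m P = Q := by
  by_cases h : P = Q
  · exact ⟨[], ⟨by simp [IsMsg], by simp [Consistent], trivial, List.nodup_nil⟩, h⟩
  · exact hM.2.1 P Q h

theorem exists_isReverse (hM : IsMedium T) (hτ : τ ∈ T) :
    ∃ τ' ∈ T, IsReverse τ τ' ∧ τ ≠ τ' := by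
  obtain ⟨P, hP⟩ := Function.ne_iff.mp (hM.1.2.2 τ hτ)
  obtain ⟨m, ⟨hmT, hmc, hmse, -⟩, hmP⟩ := hM.2.1 (τ P) P hP
  obtain ⟨τ', hτ'm, h⟩ :=
    Vacuous.exists_isReverse_of_cons (hM.2.2 (τ :: m) P (hmT.cons hτ) ⟨⟨hP, hmse⟩, hmP⟩)
  exact ⟨τ', hmT τ' hτ'm, h, fun he => hmc τ' hτ'm τ' hτ'm (he ▸ h)⟩

theorem ne_of_isReverse (hM : IsMedium T) (hτ : τ ∈ T) (h : IsReverse τ τ') : τ ≠ τ' := by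
  obtain ⟨σ, -, hσ, hne⟩ := hM.exists_isReverse hτ
  rwa [hσ.unique h] at hne

theorem isBalanced (hM : IsMedium T) (hm : IsMsg T m) (hse : StepwiseEff m P)
    (hret : mApply m P = P) : IsBalanced m := by
  intro τ hτ
  obtain ⟨τ', -, h, -⟩ := hM.exists_isReverse (hm τ hτ)
  exact ⟨τ', h, (hM.2.2 m P hm ⟨hse, hret⟩).count_eq h⟩

theorem isBalanced_append (hM : IsMedium T) (hA : Concise T A P) (hAQ : mApply A P = Q)
    (hB : Concise T B Q) (hBP : mApply B Q = P) : IsBalanced (A ++ B) :=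
  hM.isBalanced (hA.1.append hB.1) (hA.2.2.1.append (hAQ ▸ hB.2.2.1))
    (by rw [mApply_append, hAQ, hBP])

theorem isBalanced_append_cons (hM : IsMedium T) (hu : Concise T u X) (huP : mApply u X = P)
    (ht : t ∈ T) (htP : t P = P') (hP : P ≠ P') (hm : Concise T m P') (hmX : mApply m P' = X) :
    IsBalanced (u ++ t :: m) :=
  hM.isBalanced (hu.1.append (hm.1.cons ht))
    (hu.2.2.1.append (huP ▸ ⟨htP ▸ hP.symm, htP ▸ hm.2.2.1⟩))
    (by rw [mApply_append, huP, mApply, List.foldl_cons, htP]; exact hmX)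

theorem length_eq (hM : IsMedium T) (hA : Concise T A P) (hAQ : mApply A P = Q)
    (hB : Concise T B Q) (hBP : mApply B Q = P) : A.length = B.length :=
  (hM.isBalanced_append hA hAQ hB hBP).length_eq hA.2.1 hA.2.2.2 hB.2.1 hB.2.2.2

theorem reverse_mem_of_mem (hM : IsMedium T) (hA : Concise T A P) (hAQ : mApply A P = Q)
    (hB : Concise T B Q) (hBP : mApply B Q = P) (hτ : τ ∈ B) (h : IsReverse τ τ') : τ' ∈ A :=
  ((hM.isBalanced_append hA hAQ hB hBP).perm List.perm_append_comm).mem_right_of_mem_left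
    hB.2.1 hτ h

theorem apply_eq_self_of_mem (hM : IsMedium T) (hm : Concise T m X) (hmP : mApply m X = P)
    (hτ : τ ∈ m) : τ P = P := by
  by_contra hne
  obtain ⟨u, hu, huX⟩ := hM.exists_concise (τ P) X
  exact (hM.isBalanced_append_cons hm hmP (hm.1 τ hτ) rfl (Ne.symm hne) hu huX
    ).notMem_of_append_cons hm.2.1 hu.2.2.2 hτ

theorem reverse_mem_longer (hM : IsMedium T) (hu : Concise T u X) (huP : mApply u X = P)
    (ht : t ∈ T) (htP : t P = P') (hP : P ≠ P') (hm : Concise T m P') (hmX : mApply m P' = X)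
    (htt' : IsReverse t t') :
    (t' ∈ u ∧ t' ∉ m ∧ u.length = m.length + 1) ∨ (t' ∈ m ∧ t' ∉ u ∧ m.length = u.length + 1) :=
  (hM.isBalanced_append_cons hu huP ht htP hP hm hmX).reverse_mem_longer htt'
    (hM.ne_of_isReverse ht htt') hu.2.1 hu.2.2.2 hm.2.1 hm.2.2.2

theorem reverse_eq_or_mem (hM : IsMedium T) (hu : Concise T u X) (huP : mApply u X = P)
    (ht : t ∈ T) (htP : t P = P') (hP : P ≠ P') (hm : Concise T m P') (hmX : mApply m P' = X)
    (hτ : τ ∈ m) (h : IsReverse τ τ') : τ' = t ∨ τ' ∈ u := by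
  have hmem := (hM.isBalanced_append_cons hu huP ht htP hP hm hmX).mem_of_isReverse
    (by simp [hτ]) h
  have hτ'm : τ' ∉ m := fun h' => hm.2.1 τ hτ τ' h' h
  simp only [List.mem_append, List.mem_cons] at hmem
  tauto

end IsMedium

theorem stmt9_general {S' : Type*} {T : Set (S' → S')} (hM : IsMedium T)
    (St N Q W : S') (τ μ : S' → S') (hτ : τ ∈ T) (hμ : μ ∈ T)
    (hd1 : St ≠ N)
    (hd6 : Q ≠ W)
    (hNS : τ N = St) (hWQ : μ W = Q)
    (q q' w w' : List (S' → S'))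
    (hq : Concise T q St) (hq' : Concise T q' N)
    (hw : Concise T w N) (hw' : Concise T w' St)
    (hqQ : mApply q St = Q) (hq'Q : mApply q' N = Q)
    (hwW : mApply w N = W) (hw'W : mApply w' St = W) :
    τ = μ ↔ q.length + w.length + 2 = q'.length + w'.length := by
  obtain ⟨τ', -, hττ', -⟩ := hM.exists_isReverse hτ
  obtain ⟨μ', hμ'T, hμμ', -⟩ := hM.exists_isReverse hμ
  have hμ'Q : μ' Q = W := hμμ'.apply_eq hd6.symm hWQ
  obtain ⟨u, hu, huN⟩ := hM.exists_concise Q N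
  obtain ⟨v, hv, hvN⟩ := hM.exists_concise W N
  obtain ⟨s, hs, hsS⟩ := hM.exists_concise W St
  have hu_len := hM.length_eq hq' hq'Q hu huN
  have hv_len := hM.length_eq hw hwW hv hvN
  have hs_len := hM.length_eq hw' hw'W hs hsS
  have hQ := hM.reverse_mem_longer hu huN hτ hNS hd1.symm hq hqQ hττ'
  have hW := hM.reverse_mem_longer hv hvN hτ hNS hd1.symm hw' hw'W hττ'
  have hS := hM.reverse_mem_longer hq hqQ hμ'T hμ'Q hd6 hs hsS hμμ'.symm
  have hN := hM.reverse_mem_longer hw hwW hμ hWQ hd6.symm hu huN hμμ'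
  constructor
  · rintro rfl
    obtain rfl : μ' = τ' := hμμ'.unique hττ'
    have hμ'q : μ' ∉ q := fun h => hd6 ((hM.apply_eq_self_of_mem hq hqQ h).symm.trans hμ'Q)
    have hτw : τ ∉ w := fun h => hd6 ((hM.apply_eq_self_of_mem hw hwW h).symm.trans hWQ).symm
    have hμ'v : μ' ∉ v := fun h => hτw (hM.reverse_mem_of_mem hw hwW hv hvN h hττ'.symm)
    have hQ_len := (hQ.resolve_right fun h => hμ'q h.1).2.2
    have hW_len := (hW.resolve_left fun h => hμ'v h.1).2.2
    omega
  · intro hlen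
    have hQ_len := hQ.imp (·.2.2) (·.2.2)
    have hW_len := hW.imp (·.2.2) (·.2.2)
    have hS_len := hS.imp (·.2.2) (·.2.2)
    have hN_len := hN.imp (·.2.2) (·.2.2)
    obtain ⟨hμs, -, -⟩ := hS.resolve_left fun h => by have := h.2.2; omega
    obtain ⟨-, hμ'w, -⟩ := hN.resolve_left fun h => by have := h.2.2; omega
    have hμ'w' := hM.reverse_mem_of_mem hw' hw'W hs hsS hμs hμμ'
    rcases hM.reverse_eq_or_mem hv hvN hτ hNS hd1.symm hw' hw'W hμ'w' hμμ'.symm with h | h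
    · exact h.symm
    · exact absurd (hM.reverse_mem_of_mem hw hwW hv hvN h hμμ') hμ'w

/-- Theorem 5, (ii) ⇔ (iv): `τ = μ` iff `ℓ(q) + ℓ(w) + 2 = ℓ(q') + ℓ(w')`. -/
theorem stmt9 {S' : Type*} {T : Set (S' → S')} (hM : IsMedium T)
    (St N Q W : S') (τ μ : S' → S') (hτ : τ ∈ T) (hμ : μ ∈ T)
    (hd1 : St ≠ N) (hd2 : St ≠ Q) (hd3 : St ≠ W) (hd4 : N ≠ Q) (hd5 : N ≠ W)
    (hd6 : Q ≠ W)
    (hNS : τ N = St) (hWQ : μ W = Q)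
    (q q' w w' : List (S' → S'))
    (hq : Concise T q St) (hq' : Concise T q' N)
    (hw : Concise T w N) (hw' : Concise T w' St)
    (hqQ : mApply q St = Q) (hq'Q : mApply q' N = Q)
    (hwW : mApply w N = W) (hw'W : mApply w' St = W) :
    τ = μ ↔ q.length + w.length + 2 = q'.length + w'.length :=
  stmt9_general hM St N Q W τ μ hτ hμ hd1 hd6 hNS hWQ q q' w w' hq hq' hw hw' hqQ hq'Q hwW hw'W
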